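/- arXiv:2411.16396 — 2 statements merged into one kernel-verified Lean document; each statement's English description precedes it below -/
import Mathlib

section
/- For positive definite Hermitian matrices P and Q, the difference of matrix logarithms admits the integral representation log P - log Q = ∫₀^∞ (sI+P)^{-1}(P-Q)(sI+Q)^{-1} ds. -/
/-!
By the resolvent identity the integrand is `(sI + Q)⁻¹ - (sI + P)⁻¹ = f_s(P) - f_s(Q)` with
`f_s x = (s + 1)⁻¹ - (s + x)⁻¹`, and `∫₀^∞ f_s x ds = log x` for `x > 0`. Each entry of `f_s(A)`
is a finite linear combination of the values of `f_s` at the eigenvalues of `A`, so integration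
commutes with the functional calculus.
-/
open ComplexOrder MeasureTheory

/-- The matrix (principal) logarithm of a Hermitian matrix, defined via the spectral
decomposition: if `A = U diag(λ) U*` then `log A = U diag(log λ) U*`.  (Junk value `0` on
non-Hermitian input.) -/
noncomputable def matLog {n : ℕ} (A : Matrix (Fin n) (Fin n) ℂ) : Matrix (Fin n) (Fin n) ℂ :=
  if hA : A.IsHermitian then
    (Matrix.IsHermitian.eigenvectorUnitary hA : Matrix (Fin n) (Fin n) ℂ) *
      Matrix.diagonal (fun i => (Real.log (hA.eigenvalues i) : ℂ)) *
      star (Matrix.IsHermitian.eigenvectorUnitary hA : Matrix (Fin n) (Fin n) ℂ)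
  else 0

open Set Filter Topology

section Scalar

variable {a b : ℝ}

theorem hasDerivAt_log_add_sub_log_add {s : ℝ} (ha : 0 < s + a) (hb : 0 < s + b) :
    HasDerivAt (fun s => Real.log (s + a) - Real.log (s + b)) ((s + a)⁻¹ - (s + b)⁻¹) s := by
  have := (((hasDerivAt_id s).add_const a).log ha.ne').fun_sub
    (((hasDerivAt_id s).add_const b).log hb.ne')
  simpa [one_div] using this

theorem tendsto_log_add_sub_log_add (a b : ℝ) :
    Tendsto (fun s => Real.log (s + a) - Real.log (s + b)) atTop (𝓝 0) := by
  simpa using (Real.tendsto_log_comp_add_sub_log a).sub (Real.tendsto_log_comp_add_sub_log b)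

theorem integrableOn_Ioi_inv_add_sub_inv_add (ha : 0 < a) (hb : 0 < b) :
    IntegrableOn (fun s => (s + a)⁻¹ - (s + b)⁻¹) (Ioi 0) := by
  have hderiv (s : ℝ) (hs : s ∈ Ici 0) := hasDerivAt_log_add_sub_log_add (a := a) (b := b)
    (add_pos_of_nonneg_of_pos hs ha) (add_pos_of_nonneg_of_pos hs hb)
  rcases le_total a b with hab | hab
  · refine integrableOn_Ioi_deriv_of_nonneg' hderiv (fun s (hs : 0 < s) => ?_)
      (tendsto_log_add_sub_log_add a b)
    exact sub_nonneg.2 (inv_anti₀ (by positivity) (by linarith))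
  · refine integrableOn_Ioi_deriv_of_nonpos' hderiv (fun s (hs : 0 < s) => ?_)
      (tendsto_log_add_sub_log_add a b)
    exact sub_nonpos.2 (inv_anti₀ (by positivity) (by linarith))

theorem integral_Ioi_inv_add_sub_inv_add (ha : 0 < a) (hb : 0 < b) :
    ∫ s in Ioi (0 : ℝ), ((s + a)⁻¹ - (s + b)⁻¹) = Real.log b - Real.log a := by
  rw [integral_Ioi_of_hasDerivAt_of_tendsto'
    (fun s (hs : 0 ≤ s) => hasDerivAt_log_add_sub_log_add (by positivity) (by positivity))
    (integrableOn_Ioi_inv_add_sub_inv_add ha hb) (tendsto_log_add_sub_log_add a b)]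
  simp

end Scalar

section HermitianMatrix

variable {m 𝕜 : Type*} [RCLike 𝕜] [Fintype m] [DecidableEq m] {A B : Matrix m m 𝕜}

theorem Matrix.inv_mul_sub_mul_inv {R : Type*} [CommRing R] {X Y : Matrix m m R} (hX : IsUnit X)
    (hY : IsUnit Y) : X⁻¹ * (X - Y) * Y⁻¹ = Y⁻¹ - X⁻¹ := by
  rw [Matrix.mul_sub, Matrix.sub_mul, Matrix.nonsing_inv_mul X ((isUnit_iff_isUnit_det X).1 hX),
    one_mul, Matrix.mul_assoc, Matrix.mul_nonsing_inv Y ((isUnit_iff_isUnit_det Y).1 hY), mul_one]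

theorem Matrix.PosDef.pos_of_mem_spectrum_real (hA : A.PosDef) {x : ℝ} (hx : x ∈ spectrum ℝ A) :
    0 < x := by
  open scoped MatrixOrder in exact hA.isStrictlyPositive.spectrum_pos hx

namespace Matrix.IsHermitian

theorem cfc_apply_eq_sum (hA : A.IsHermitian) (f : ℝ → ℝ) (i j : m) :
    cfc f A i j = ∑ k, (hA.eigenvectorUnitary : Matrix m m 𝕜) i k * f (hA.eigenvalues k) *
      star ((hA.eigenvectorUnitary : Matrix m m 𝕜) j k) := by
  rw [hA.cfc_eq, IsHermitian.cfc, Unitary.conjStarAlgAut_apply, Matrix.mul_apply]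
  simp [Matrix.mul_diagonal]

section Integral

variable {α : Type*} [MeasurableSpace α] {μ : Measure α} {f : α → ℝ → ℝ}

theorem integrable_cfc_apply (hA : A.IsHermitian)
    (hf : ∀ x ∈ spectrum ℝ A, Integrable (f · x) μ) (i j : m) :
    Integrable (fun s => cfc (f s) A i j) μ := by
  simp_rw [hA.cfc_apply_eq_sum]
  exact integrable_finsetSum _ fun k _ =>
    ((hf _ (hA.eigenvalues_mem_spectrum_real k)).ofReal.const_mul _).mul_const _

theorem integral_cfc_apply (hA : A.IsHermitian)
    (hf : ∀ x ∈ spectrum ℝ A, Integrable (f · x) μ) (i j : m) :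
    ∫ s, cfc (f s) A i j ∂μ = cfc (fun x => ∫ s, f s x ∂μ) A i j := by
  simp_rw [hA.cfc_apply_eq_sum]
  rw [integral_finsetSum _ fun k _ =>
    ((hf _ (hA.eigenvalues_mem_spectrum_real k)).ofReal.const_mul _).mul_const _]
  simp_rw [integral_mul_const, integral_const_mul, integral_ofReal]

end Integral

theorem cfc_const_add_id (hA : A.IsHermitian) (s : ℝ) :
    cfc (fun x => s + x) A = (s : 𝕜) • 1 + A := by
  rw [cfc_const_add s (fun x => x) A (ha := hA.isSelfAdjoint), cfc_id' ℝ A hA.isSelfAdjoint,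
    Algebra.algebraMap_eq_smul_one, RCLike.real_smul_eq_coe_smul (K := 𝕜)]

variable {s : ℝ}

theorem isUnit_smul_one_add (hA : A.IsHermitian) (hs : ∀ x ∈ spectrum ℝ A, s + x ≠ 0) :
    IsUnit ((s : 𝕜) • 1 + A) := by
  rw [← hA.cfc_const_add_id]
  exact (isUnit_cfc_iff (fun x => s + x) A (ha := hA.isSelfAdjoint)).2 hs

theorem cfc_inv_const_add_id (hA : A.IsHermitian) (hs : ∀ x ∈ spectrum ℝ A, s + x ≠ 0) :
    cfc (fun x => (s + x)⁻¹) A = ((s : 𝕜) • 1 + A)⁻¹ := by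
  rw [cfc_inv (fun x => s + x) A hs (ha := hA.isSelfAdjoint), hA.cfc_const_add_id,
    Matrix.nonsing_inv_eq_ringInverse]

theorem cfc_const_sub_inv_const_add (hA : A.IsHermitian) (c : ℝ)
    (hs : ∀ x ∈ spectrum ℝ A, s + x ≠ 0) :
    cfc (fun x => c - (s + x)⁻¹) A = algebraMap ℝ (Matrix m m 𝕜) c - ((s : 𝕜) • 1 + A)⁻¹ := by
  rw [cfc_sub (fun _ => c) (fun x => (s + x)⁻¹) A continuousOn_const
      ((continuousOn_const.add continuousOn_id).inv₀ hs),
    cfc_const c A hA.isSelfAdjoint, hA.cfc_inv_const_add_id hs]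

/-- The constant `c` cancels; with `c = (s + 1)⁻¹` each term is integrable over `s ∈ (0, ∞)`. -/
theorem inv_smul_one_add_mul_sub_mul_inv (hA : A.IsHermitian) (hB : B.IsHermitian) (c : ℝ)
    (hsA : ∀ x ∈ spectrum ℝ A, s + x ≠ 0) (hsB : ∀ x ∈ spectrum ℝ B, s + x ≠ 0) :
    ((s : 𝕜) • 1 + A)⁻¹ * (A - B) * ((s : 𝕜) • 1 + B)⁻¹ =
      cfc (fun x => c - (s + x)⁻¹) A - cfc (fun x => c - (s + x)⁻¹) B := by
  have hres := Matrix.inv_mul_sub_mul_inv (hA.isUnit_smul_one_add hsA) (hB.isUnit_smul_one_add hsB)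
  rw [add_sub_add_left_eq_sub] at hres
  rw [hres, hA.cfc_const_sub_inv_const_add c hsA, hB.cfc_const_sub_inv_const_add c hsB,
    sub_sub_sub_cancel_left]

end Matrix.IsHermitian

namespace Matrix.PosDef

theorem integrableOn_cfc_inv_add_one_sub_inv_add_apply (hA : A.PosDef) (i j : m) :
    IntegrableOn (fun s : ℝ => cfc (fun x => (s + 1)⁻¹ - (s + x)⁻¹) A i j) (Ioi 0) :=
  hA.1.integrable_cfc_apply (fun _ hx =>
    integrableOn_Ioi_inv_add_sub_inv_add one_pos (hA.pos_of_mem_spectrum_real hx)) i j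

theorem cfc_log_apply_eq_integral (hA : A.PosDef) (i j : m) :
    cfc Real.log A i j = ∫ s in Ioi (0 : ℝ), cfc (fun x => (s + 1)⁻¹ - (s + x)⁻¹) A i j := by
  rw [hA.1.integral_cfc_apply (fun _ hx =>
    integrableOn_Ioi_inv_add_sub_inv_add one_pos (hA.pos_of_mem_spectrum_real hx))]
  refine congrArg (fun M : Matrix m m 𝕜 => M i j) (cfc_congr fun x hx => ?_)
  rw [integral_Ioi_inv_add_sub_inv_add one_pos (hA.pos_of_mem_spectrum_real hx), Real.log_one,
    sub_zero]

end Matrix.PosDef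

end HermitianMatrix

theorem matLog_eq_cfc {n : ℕ} {A : Matrix (Fin n) (Fin n) ℂ} (hA : A.IsHermitian) :
    matLog A = cfc Real.log A := by
  rw [matLog, dif_pos hA, hA.cfc_eq, Matrix.IsHermitian.cfc, Unitary.conjStarAlgAut_apply]
  rfl

/-- **Integral representation of the difference of matrix logarithms.**  For positive definite
Hermitian matrices `P` and `Q`,
`log P - log Q = ∫₀^∞ (sI + P)⁻¹ (P - Q) (sI + Q)⁻¹ ds` (entrywise). -/
theorem matLog_sub_eq_integral_resolvent {n : ℕ} (P Q : Matrix (Fin n) (Fin n) ℂ)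
    (hP : P.PosDef) (hQ : Q.PosDef) (i j : Fin n) :
    (matLog P - matLog Q) i j =
      ∫ s in Set.Ioi (0 : ℝ),
        (((s : ℂ) • (1 : Matrix (Fin n) (Fin n) ℂ) + P)⁻¹ * (P - Q) *
          ((s : ℂ) • (1 : Matrix (Fin n) (Fin n) ℂ) + Q)⁻¹) i j := by
  have hne {A : Matrix (Fin n) (Fin n) ℂ} (hA : A.PosDef) {s : ℝ} (hs : 0 < s) :
      ∀ x ∈ spectrum ℝ A, s + x ≠ 0 := fun _ hx =>
    (add_pos hs (hA.pos_of_mem_spectrum_real hx)).ne'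
  have hintegrand : ∀ s ∈ Ioi (0 : ℝ),
      (((s : ℂ) • (1 : Matrix (Fin n) (Fin n) ℂ) + P)⁻¹ * (P - Q) *
        ((s : ℂ) • (1 : Matrix (Fin n) (Fin n) ℂ) + Q)⁻¹) i j =
      cfc (fun x => (s + 1)⁻¹ - (s + x)⁻¹) P i j - cfc (fun x => (s + 1)⁻¹ - (s + x)⁻¹) Q i j :=
    fun s (hs : 0 < s) => congrArg (fun M : Matrix (Fin n) (Fin n) ℂ => M i j)
      (hP.1.inv_smul_one_add_mul_sub_mul_inv hQ.1 _ (hne hP hs) (hne hQ hs))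
  rw [setIntegral_congr_fun measurableSet_Ioi hintegrand,
    integral_sub (hP.integrableOn_cfc_inv_add_one_sub_inv_add_apply i j)
      (hQ.integrableOn_cfc_inv_add_one_sub_inv_add_apply i j),
    ← hP.cfc_log_apply_eq_integral, ← hQ.cfc_log_apply_eq_integral, Matrix.sub_apply,
    matLog_eq_cfc hP.1, matLog_eq_cfc hQ.1]
end

section
/- For the one-qubit model with true state ρ = I/2, diagonal model σ(θ) = diag(cos²θ, sin²θ), and the Pauli 6-outcome measurement with weights 1/3 on each eigenbasis projector, the induced classical KL divergence equals K(θ) = −(1/6)(log(sin²θ cos²θ) + 2 log 2), and consequently D(ρ‖σ(θ)) = 3·K(θ) for all θ ∈ (0, π/2). -/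
open ComplexOrder Real

/-- The quantum relative entropy `D(ρ‖σ) = Tr(ρ(log ρ − log σ))`. -/
noncomputable def qRelEntropy {n : ℕ} (ρ σ : Matrix (Fin n) (Fin n) ℂ) : ℝ :=
  ((ρ * (matLog ρ - matLog σ)).trace).re

/-- The Kullback–Leibler divergence on a finite outcome space. -/
noncomputable def klDiv {X : Type*} [Fintype X] (q p : X → ℝ) : ℝ :=
  ∑ x, q x * Real.log (q x / p x)

/-- The maximally mixed one-qubit state `ρ = I/2`. -/
noncomputable def ρmm : Matrix (Fin 2) (Fin 2) ℂ := (1 / 2 : ℂ) • 1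

/-- The one-parameter diagonal model `σ(θ) = diag(cos²θ, sin²θ)`. -/
noncomputable def σmod (θ : ℝ) : Matrix (Fin 2) (Fin 2) ℂ :=
  Matrix.diagonal ![((Real.cos θ ^ 2 : ℝ) : ℂ), ((Real.sin θ ^ 2 : ℝ) : ℂ)]

/-- The Pauli 6-outcome measurement: `(1/3)|0⟩⟨0|, (1/3)|1⟩⟨1|, (1/3)|+⟩⟨+|, (1/3)|−⟩⟨−|,
(1/3)|r⟩⟨r|, (1/3)|l⟩⟨l|`, the eigenbasis projectors of the Pauli `Z`, `X`, `Y` with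
uniform weights `1/3`. -/
noncomputable def pauliPOVM : Fin 6 → Matrix (Fin 2) (Fin 2) ℂ :=
  ![(1 / 3 : ℂ) • Matrix.diagonal ![1, 0],
    (1 / 3 : ℂ) • Matrix.diagonal ![0, 1],
    (1 / 6 : ℂ) • !![1, 1; 1, 1],
    (1 / 6 : ℂ) • !![1, -1; -1, 1],
    (1 / 6 : ℂ) • !![1, -Complex.I; Complex.I, 1],
    (1 / 6 : ℂ) • !![1, Complex.I; -Complex.I, 1]]

/-!
Since `ρ = I/2` and every POVM element has trace `1/3`, the measured distribution `q` is uniform.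
Since `σ(θ)` is diagonal, the `X` and `Y` outcomes see only `Tr σ(θ) = 1` and have probability
`1/6` as well, so only the two `Z` outcomes contribute to `K(θ)`. On the quantum side `ρ` is
scalar, so `D(ρ‖σ) = (Tr log ρ - Tr log σ) / 2`, and `Tr log A = log det A` for positive
definite `A`.
-/

lemma trace_matLog {n : ℕ} {A : Matrix (Fin n) (Fin n) ℂ} (hA : A.PosDef) :
    (matLog A).trace = ((Real.log A.det.re : ℝ) : ℂ) := by
  have hdet : A.det.re = ∏ i, hA.1.eigenvalues i := by
    rw [show A.det = ∏ i, ((hA.1.eigenvalues i : ℝ) : ℂ) from hA.1.det_eq_prod_eigenvalues,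
      ← Complex.ofReal_prod, Complex.ofReal_re]
  rw [matLog, dif_pos hA.1, Matrix.trace_mul_cycle, Unitary.coe_star_mul_self, one_mul,
    Matrix.trace_diagonal, hdet, Real.log_prod fun i _ => (hA.eigenvalues_pos i).ne']
  push_cast
  rfl

lemma qRelEntropy_smul_one {n : ℕ} {c : ℝ} (hc : 0 < c) {σ : Matrix (Fin n) (Fin n) ℂ}
    (hσ : σ.PosDef) :
    qRelEntropy ((c : ℂ) • 1) σ = c * (n * Real.log c - Real.log σ.det.re) := by
  have hρ : ((c : ℂ) • (1 : Matrix (Fin n) (Fin n) ℂ)).PosDef :=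
    Matrix.PosDef.one.smul (Complex.zero_lt_real.mpr hc)
  rw [qRelEntropy, smul_mul_assoc, one_mul, Matrix.trace_smul, Matrix.trace_sub,
    trace_matLog hρ, trace_matLog hσ, Matrix.det_smul, Matrix.det_one, mul_one,
    Fintype.card_fin, ← Complex.ofReal_pow, Complex.ofReal_re, Real.log_pow, ← Complex.ofReal_sub,
    smul_eq_mul, ← Complex.ofReal_mul, Complex.ofReal_re]

lemma ρmm_eq_smul_one : ρmm = ((1 / 2 : ℝ) : ℂ) • 1 := by
  rw [ρmm]; push_cast; rfl

lemma σmod_posDef {θ : ℝ} (hcos : Real.cos θ ≠ 0) (hsin : Real.sin θ ≠ 0) :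
    (σmod θ).PosDef := by
  refine Matrix.posDef_diagonal_iff.mpr fun i => ?_
  fin_cases i <;>
    simp only [Fin.zero_eta, Fin.mk_one, Matrix.cons_val_zero, Matrix.cons_val_one] <;>
    exact Complex.zero_lt_real.mpr (by positivity)

lemma re_det_σmod (θ : ℝ) : (σmod θ).det.re = Real.cos θ ^ 2 * Real.sin θ ^ 2 := by
  rw [σmod, Matrix.det_diagonal, Fin.prod_univ_two]
  simp [← Complex.ofReal_mul, -Complex.ofReal_pow, -Complex.ofReal_cos, -Complex.ofReal_sin]

lemma trace_pauliPOVM (x : Fin 6) : (pauliPOVM x).trace = 1 / 3 := by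
  fin_cases x <;> simp [pauliPOVM, Matrix.trace_fin_two] <;> norm_num

lemma re_trace_ρmm_mul_pauliPOVM (x : Fin 6) : ((ρmm * pauliPOVM x).trace).re = 1 / 6 := by
  rw [ρmm, smul_mul_assoc, one_mul, Matrix.trace_smul, trace_pauliPOVM]
  norm_num

noncomputable def pauliProbs (a b : ℝ) : Fin 6 → ℝ := ![a / 3, b / 3, 1 / 6, 1 / 6, 1 / 6, 1 / 6]

lemma re_trace_diagonal_mul_pauliPOVM {a b : ℝ} (hab : a + b = 1) (x : Fin 6) :
    ((Matrix.diagonal ![(a : ℂ), (b : ℂ)] * pauliPOVM x).trace).re = pauliProbs a b x := by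
  fin_cases x <;> simp [pauliPOVM, pauliProbs, Matrix.trace_fin_two] <;> linarith

lemma klDiv_const_pauliProbs {a b : ℝ} (ha : 0 < a) (hb : 0 < b) :
    klDiv (fun _ => 1 / 6) (pauliProbs a b) = -(1 / 6) * (Real.log (a * b) + 2 * Real.log 2) := by
  have hlog {c : ℝ} (hc : 0 < c) : Real.log (1 / 6 / (c / 3)) = -(Real.log 2 + Real.log c) := by
    rw [show (1 / 6 : ℝ) / (c / 3) = (2 * c)⁻¹ by field_simp; ring, Real.log_inv,
      Real.log_mul two_ne_zero hc.ne']
  simp only [klDiv, pauliProbs, Fin.sum_univ_six, Matrix.cons_val, hlog ha, hlog hb,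
    div_self (by norm_num : (1 / 6 : ℝ) ≠ 0), Real.log_one, Real.log_mul ha.ne' hb.ne']
  ring

/-- **KL divergence of the Pauli-measured one-qubit model, and its ratio to the quantum
relative entropy.**  For `ρ = I/2`, `σ(θ) = diag(cos²θ, sin²θ)` and the Pauli 6-outcome
measurement, the induced classical KL divergence equals
`K(θ) = −(1/6)(log(sin²θ cos²θ) + 2 log 2)`, and consequently `D(ρ‖σ(θ)) = 3·K(θ)` for all
`θ ∈ (0, π/2)`. -/
theorem one_qubit_pauli_kl :
    ∀ θ ∈ Set.Ioo (0 : ℝ) (π / 2),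
      klDiv (fun x => ((ρmm * pauliPOVM x).trace).re)
          (fun x => ((σmod θ * pauliPOVM x).trace).re) =
        -(1 / 6 : ℝ) * (Real.log (Real.sin θ ^ 2 * Real.cos θ ^ 2) + 2 * Real.log 2) ∧
      qRelEntropy ρmm (σmod θ) =
        3 * klDiv (fun x => ((ρmm * pauliPOVM x).trace).re)
          (fun x => ((σmod θ * pauliPOVM x).trace).re) := by
  rintro θ ⟨h0, h1⟩
  have hcos : 0 < Real.cos θ := Real.cos_pos_of_mem_Ioo ⟨by linarith [Real.pi_pos], h1⟩
  have hsin : 0 < Real.sin θ := Real.sin_pos_of_pos_of_lt_pi h0 (by linarith [Real.pi_pos])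
  have hK : klDiv (fun x => ((ρmm * pauliPOVM x).trace).re)
      (fun x => ((σmod θ * pauliPOVM x).trace).re) =
        -(1 / 6 : ℝ) * (Real.log (Real.sin θ ^ 2 * Real.cos θ ^ 2) + 2 * Real.log 2) := by
    simp only [re_trace_ρmm_mul_pauliPOVM, σmod,
      re_trace_diagonal_mul_pauliPOVM (Real.cos_sq_add_sin_sq θ)]
    rw [klDiv_const_pauliProbs (by positivity) (by positivity), mul_comm (Real.cos θ ^ 2)]
  refine ⟨hK, ?_⟩
  rw [hK, ρmm_eq_smul_one, qRelEntropy_smul_one (by norm_num) (σmod_posDef hcos.ne' hsin.ne'),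
    re_det_σmod, mul_comm (Real.cos θ ^ 2), one_div 2, Real.log_inv]
  push_cast
  ring
end
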